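/- arXiv:1209.3606 — 2 statements merged into one kernel-verified Lean document; each statement's English description precedes it below -/
import Mathlib

section
/- For every endofunctor S of the category of sets (Type u) that preserves finite coproducts, there exists exactly one natural transformation from S to the ultrafilter functor. -/
open CategoryTheory

universe u

/-- The ultrafilter endofunctor on the category of sets. -/
def ultrafilterFunctor : Type u ⥤ Type u where
  obj X := Ultrafilter X
  map f := TypeCat.ofHom (Ultrafilter.map f)
  map_id _ := by ext U s; first | exact Iff.rfl | simp
  map_comp f g := by ext U s; first | exact Iff.rfl | simp

namespace Stmt5Aux

open CategoryTheory.Limits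

variable (S : Type u ⥤ Type u) [Limits.PreservesFiniteCoproducts S]

/-- The inclusion of a subset as a morphism in `Type u`. -/
def inA {X : Type u} (A : Set X) : (A : Type u) ⟶ X := TypeCat.ofHom Subtype.val

theorem mem_or_of_isCompl {g : Type u} {U V : Set g} (h : IsCompl U V) (x : g) :
    x ∈ U ∨ x ∈ V := by
  have h2 := h.sup_eq_top
  simp only [Set.sup_eq_union, Set.top_eq_univ] at h2
  have hx : x ∈ U ∪ V := h2.symm ▸ Set.mem_univ x
  exact hx

theorem range_comp_subset {P Q X : Type u} (f : P ⟶ Q) (g : Q ⟶ X) :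
    Set.range (S.map (f ≫ g)) ⊆ Set.range (S.map g) := by
  rw [S.map_comp, types_comp]
  exact Set.range_comp_subset_range _ _

theorem key {P Q X : Type u} (p : P ⟶ X) (q : Q ⟶ X)
    (hp : Function.Injective p) (hq : Function.Injective q)
    (h : IsCompl (Set.range p) (Set.range q)) :
    IsCompl (Set.range (S.map p)) (Set.range (S.map q)) := by
  haveI : PreservesColimitsOfShape (Discrete Limits.WalkingPair) S :=
    inferInstance
  have l : IsColimit (BinaryCofan.mk p q) :=
    ((Types.binaryCofan_isColimit_iff _).mpr ⟨hp, hq, h⟩).some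
  have l' : IsColimit (BinaryCofan.mk (S.map p) (S.map q)) :=
    mapIsColimitOfPreservesOfIsColimit S p q l
  exact ((Types.binaryCofan_isColimit_iff _).mp ⟨l'⟩).2.2

theorem key_compl {X : Type u} (A : Set X) :
    IsCompl (Set.range (S.map (inA A))) (Set.range (S.map (inA Aᶜ))) := by
  refine key S _ _ Subtype.val_injective Subtype.val_injective ?_
  rw [show Set.range (inA A) = A from Subtype.range_val,
    show Set.range (inA Aᶜ) = Aᶜ from Subtype.range_val]
  exact isCompl_compl

theorem mono {X : Type u} {A B : Set X} (h : A ⊆ B) :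
    Set.range (S.map (inA A)) ⊆ Set.range (S.map (inA B)) := by
  have : inA A = ((TypeCat.ofHom (Set.inclusion h) : (A : Type u) ⟶ (B : Type u)) ≫ inA B) := rfl
  rw [this]
  exact range_comp_subset S _ _

theorem cover {X : Type u} (A : Set X) {s : S.obj X} :
    s ∈ Set.range (S.map (inA A)) ∨ s ∈ Set.range (S.map (inA Aᶜ)) := by
  exact mem_or_of_isCompl (key_compl S A) s

theorem not_both {X : Type u} (A : Set X) {s : S.obj X}
    (h1 : s ∈ Set.range (S.map (inA A))) (h2 : s ∈ Set.range (S.map (inA Aᶜ))) : False :=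
  (key_compl S A).disjoint.le_bot ⟨h1, h2⟩

theorem disj {X : Type u} {A B : Set X} (h : Disjoint A B) {s : S.obj X}
    (h1 : s ∈ Set.range (S.map (inA A))) (h2 : s ∈ Set.range (S.map (inA B))) : False := by
  have hAB : A ⊆ Bᶜ := Set.disjoint_left.mp h
  exact not_both S B h2 (mono S hAB h1)

/-- Splitting across a disjoint union. -/
theorem split {X : Type u} {C D : Set X} (h : Disjoint C D) {s : S.obj X}
    (hs : s ∈ Set.range (S.map (inA (C ∪ D)))) :
    s ∈ Set.range (S.map (inA C)) ∨ s ∈ Set.range (S.map (inA D)) := by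
  set E := C ∪ D with hE
  let p : (C : Type u) ⟶ (E : Type u) := TypeCat.ofHom (Set.inclusion Set.subset_union_left)
  let q : (D : Type u) ⟶ (E : Type u) := TypeCat.ofHom (Set.inclusion Set.subset_union_right)
  have hcompl : IsCompl (Set.range p) (Set.range q) := by
    change IsCompl (Set.range (Set.inclusion (Set.subset_union_left : C ⊆ E))) (Set.range (Set.inclusion (Set.subset_union_right : D ⊆ E)))
    rw [Set.range_inclusion, Set.range_inclusion]
    constructor
    · rw [Set.disjoint_left]
      rintro ⟨x, hx⟩ hC hD
      exact Set.disjoint_left.mp h hC hD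
    · rw [codisjoint_iff]
      apply eq_top_iff.mpr
      rintro x -
      show x ∈ {x : (E : Type u) | ↑x ∈ C} ∪ {x : (E : Type u) | ↑x ∈ D}
      obtain ⟨x, hx⟩ := x
      rcases hx with hx | hx
      · exact Or.inl hx
      · exact Or.inr hx
  have hkey := key S p q (Set.inclusion_injective (Set.subset_union_left : C ⊆ E)) (Set.inclusion_injective (Set.subset_union_right : D ⊆ E)) hcompl
  obtain ⟨t, ht⟩ := hs
  have htmem : t ∈ Set.range (S.map p) ∨ t ∈ Set.range (S.map q) :=
    mem_or_of_isCompl hkey t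
  rcases htmem with ⟨u, hu⟩ | ⟨u, hu⟩
  · left
    refine ⟨u, ?_⟩
    have : (p ≫ inA E) = inA C := rfl
    calc S.map (inA C) u = S.map (p ≫ inA E) u := by rw [this]
    _ = S.map (inA E) (S.map p u) := by rw [S.map_comp]; rfl
    _ = S.map (inA E) t := by rw [hu]
    _ = s := ht
  · right
    refine ⟨u, ?_⟩
    have : (q ≫ inA E) = inA D := rfl
    calc S.map (inA D) u = S.map (q ≫ inA E) u := by rw [this]
    _ = S.map (inA E) (S.map q u) := by rw [S.map_comp]; rfl
    _ = S.map (inA E) t := by rw [hu]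
    _ = s := ht

theorem univ_mem {X : Type u} (s : S.obj X) :
    s ∈ Set.range (S.map (inA (Set.univ : Set X))) := by
  have : IsIso (inA (Set.univ : Set X)) :=
    (isIso_iff_bijective _).mpr (Equiv.Set.univ X).bijective
  have : IsIso (S.map (inA (Set.univ : Set X))) := inferInstance
  exact ((isIso_iff_bijective _).mp this).2 s

/-- The ultrafilter associated to an element of `S.obj X`. -/
noncomputable def uf {X : Type u} (s : S.obj X) : Ultrafilter X :=
  Ultrafilter.ofComplNotMemIff
    { sets := {A | s ∈ Set.range (S.map (inA A))}
      univ_sets := univ_mem S s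
      sets_of_superset := fun h hsub => mono S hsub h
      inter_sets := by
        intro A B hA hB
        rcases cover S (A ∩ B) (s := s) with h | h
        · exact h
        · exfalso
          have hE : (A ∩ B)ᶜ = Aᶜ ∪ (A ∩ Bᶜ) := by
            ext x; by_cases hx : x ∈ A <;> simp [hx]
          rw [hE] at h
          have hdisj : Disjoint Aᶜ (A ∩ Bᶜ) := by
            rw [Set.disjoint_left]
            rintro x hx ⟨hx', _⟩
            exact hx hx'
          rcases split S hdisj h with h | h
          · exact not_both S A hA h
          · exact not_both S B hB (mono S Set.inter_subset_right h) }
    (by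
      intro A
      constructor
      · intro h
        rcases cover S A (s := s) with h' | h'
        · exact h'
        · exact absurd h' h
      · intro h h'
        exact not_both S A h h')

theorem mem_uf_iff {X : Type u} (s : S.obj X) (A : Set X) :
    A ∈ uf S s ↔ s ∈ Set.range (S.map (inA A)) := Iff.rfl

end Stmt5Aux

/-- For every endofunctor `S` of the category of sets that preserves finite coproducts,
there exists exactly one natural transformation from `S` to the ultrafilter functor. -/
theorem stmt5 (S : Type u ⥤ Type u) [Limits.PreservesFiniteCoproducts S] :
    ∃ α : S ⟶ ultrafilterFunctor.{u}, ∀ β : S ⟶ ultrafilterFunctor.{u}, β = α := by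
  classical
  open Stmt5Aux in
  refine ⟨{ app := fun X => TypeCat.ofHom fun s => uf S s, naturality := ?_ }, ?_⟩
  · intro X Y f
    ext s
    show uf S (S.map f s) = Ultrafilter.map f (uf S s)
    rw [← Ultrafilter.coe_le_coe]
    intro B hB
    rw [Ultrafilter.mem_coe, Ultrafilter.mem_map, mem_uf_iff] at hB
    rw [Ultrafilter.mem_coe, mem_uf_iff]
    obtain ⟨t, ht⟩ := hB
    refine ⟨S.map (TypeCat.ofHom (fun x : (f ⁻¹' B : Set X) => (⟨f x.1, x.2⟩ : (B : Set Y)))) t, ?_⟩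
    have hcomp : (inA (f ⁻¹' B) ≫ f)
        = ((TypeCat.ofHom (fun x : (f ⁻¹' B : Set X) => (⟨f x.1, x.2⟩ : (B : Set Y)))) ≫ inA B) := rfl
    calc S.map (inA B) (S.map (TypeCat.ofHom (fun x : (f ⁻¹' B : Set X) => (⟨f x.1, x.2⟩ : (B : Set Y)))) t)
        = S.map ((TypeCat.ofHom (fun x : (f ⁻¹' B : Set X) => (⟨f x.1, x.2⟩ : (B : Set Y)))) ≫ inA B) t := by
          rw [S.map_comp]; rfl
    _ = S.map (inA (f ⁻¹' B) ≫ f) t := by rw [hcomp]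
    _ = S.map f (S.map (inA (f ⁻¹' B)) t) := by rw [S.map_comp]; rfl
    _ = S.map f s := by rw [ht]
  · intro β
    ext X s
    show @Eq (Ultrafilter X) (β.app X s) (uf S s)
    apply Ultrafilter.coe_le_coe.mp
    intro A hA
    rw [Ultrafilter.mem_coe, mem_uf_iff] at hA
    obtain ⟨t, ht⟩ := hA
    have hnat := types_congr_hom (β.naturality (inA A)) t
    simp only [types_comp_apply] at hnat
    rw [← ht, hnat]
    show A ∈ Ultrafilter.map (inA A) (β.app (A : Type u) t)
    apply Ultrafilter.mem_map.mpr
    have : (inA A) ⁻¹' A = Set.univ := Set.eq_univ_of_forall fun x => x.2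
    rw [this]
    exact Filter.univ_mem
end

section
/- Let k be a field and X a k-vector space. Let I be any natural transformation from the functor (finite-dimensional k-vector spaces) → Set, B ↦ Hom_k(X,B), to the forgetful (underlying set) functor. Then each component I_B : Hom_k(X,B) → B is automatically k-linear: I_B(f + g) = I_B(f) + I_B(g) and I_B(c • f) = c • I_B(f) for all f, g ∈ Hom_k(X,B) and c ∈ k. -/
open CategoryTheory

universe u

/-- The functor from finite-dimensional `k`-vector spaces to `Set` sending
`B ↦ Hom_k(X, B)`, with postcomposition on maps. -/
def homLinFunctor (k : Type u) [Field k] (X : Type u) [AddCommGroup X] [Module k X] :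
    FGModuleCat k ⥤ Type u where
  obj B := X →ₗ[k] B
  map θ := TypeCat.ofHom fun f => LinearMap.comp θ.hom.hom f
  map_id _ := by apply ConcreteCategory.hom_ext; intro f; exact LinearMap.id_comp f
  map_comp θ₁ θ₂ := by apply ConcreteCategory.hom_ext; intro f; exact (LinearMap.comp_assoc f θ₁.hom.hom θ₂.hom.hom).symm

/-- The forgetful (underlying set) functor on finite-dimensional `k`-vector spaces. -/
@[reducible] def fgForget (k : Type u) [Field k] : FGModuleCat k ⥤ Type u where
  obj B := B
  map θ := TypeCat.ofHom fun b => θ.hom.hom b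

/-- Every natural transformation `I` from the functor `B ↦ Hom_k(X,B)` on
finite-dimensional `k`-vector spaces to the forgetful functor has automatically
`k`-linear components: `I_B (f + g) = I_B f + I_B g` and `I_B (c • f) = c • I_B f`. -/
theorem stmt17 (k : Type u) [Field k] (X : Type u) [AddCommGroup X] [Module k X]
    (I : homLinFunctor k X ⟶ fgForget k) :
    ∀ (B : FGModuleCat k) (f g : X →ₗ[k] B) (c : k),
      I.app B (f + g) = I.app B f + I.app B g ∧
      I.app B (c • f) = c • I.app B f := by
  intro B f g c
  have nat : ∀ (C D : FGModuleCat k) (θ : C ⟶ D) (p : X →ₗ[k] C),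
      I.app D (LinearMap.comp θ.hom.hom p) = θ.hom.hom (I.app C p) := by
    intro C D θ p
    exact ConcreteCategory.congr_hom (I.naturality θ) p
  constructor
  · set B2 : FGModuleCat k := FGModuleCat.of k (B × B) with hB2
    let p : X →ₗ[k] B2 := f.prod g
    let θadd : B2 ⟶ B := FGModuleCat.ofHom (LinearMap.fst k B B + LinearMap.snd k B B : B2 →ₗ[k] B)
    let θ1 : B2 ⟶ B := FGModuleCat.ofHom (LinearMap.fst k B B : B2 →ₗ[k] B)
    let θ2 : B2 ⟶ B := FGModuleCat.ofHom (LinearMap.snd k B B : B2 →ₗ[k] B)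
    have h1 := nat B2 B θ1 p
    rw [show θ1.hom.hom ∘ₗ p = f from LinearMap.ext fun _ => rfl] at h1
    have h2 := nat B2 B θ2 p
    rw [show θ2.hom.hom ∘ₗ p = g from LinearMap.ext fun _ => rfl] at h2
    have h3 := nat B2 B θadd p
    rw [show θadd.hom.hom ∘ₗ p = f + g from LinearMap.ext fun _ => rfl] at h3
    rw [h3, h1, h2]
    rfl
  · let θ : B ⟶ B := FGModuleCat.ofHom (c • LinearMap.id : B →ₗ[k] B)
    have h := nat B B θ f
    have hcomp : LinearMap.comp θ.hom.hom f = c • f := by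
      ext x; rfl
    rw [hcomp] at h
    exact h
end
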